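/- arXiv:2112.00830 — 4 statements merged into one kernel-verified Lean document; each statement's English description precedes it below -/
import Mathlib

section
/- Let n ≥ 1, s ∈ (0,1), and let G be a Young function satisfying condition (cond) with exponents 1 < p⁻ ≤ p⁺ < ∞ and s·p⁺ < n. Let G^{-1} be the inverse of G on [0,∞). Then ∫₀¹ G^{-1}(τ)·τ^{−1−s/n} dτ < ∞ and ∫₁^∞ G^{-1}(τ)·τ^{−1−s/n} dτ = ∞. -/
open MeasureTheory Real Set Filter
open scoped ENNReal

noncomputable section

/-- A Young function `G` together with its right-continuous density `g`:
`G t = ∫₀ᵗ g(τ) dτ` for `t ≥ 0`, where `g` is right-continuous, nondecreasing on `[0,∞)`,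
`g 0 = 0`, `g t > 0` for `t > 0` and `g t → ∞` as `t → ∞`.  `G` is extended evenly
(`G (-t) = G t`) and `g` oddly (`g (-t) = -g t`). -/
structure YoungPair where
  g : ℝ → ℝ
  G : ℝ → ℝ
  g_odd : ∀ t, g (-t) = -g t
  g_zero : g 0 = 0
  g_pos : ∀ t : ℝ, 0 < t → 0 < g t
  g_mono : MonotoneOn g (Set.Ici 0)
  g_rightCont : ∀ t ∈ Set.Ici (0 : ℝ), ContinuousWithinAt g (Set.Ici t) t
  g_atTop : Filter.Tendsto g Filter.atTop Filter.atTop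
  G_even : ∀ t, G (-t) = G t
  G_eq : ∀ t : ℝ, 0 ≤ t → G t = ∫ τ in (0 : ℝ)..t, g τ

/-- Condition (cond): `p⁻ ≤ t·g(t)/G(t) ≤ p⁺` for all `t > 0`. -/
def YoungPair.Cond (Y : YoungPair) (pm pp : ℝ) : Prop :=
  ∀ t : ℝ, 0 < t → pm * Y.G t ≤ t * Y.g t ∧ t * Y.g t ≤ pp * Y.G t

/-- Euclidean space `ℝⁿ`. -/
abbrev Euc (n : ℕ) := EuclideanSpace ℝ (Fin n)

/-- The `s`-Hölder quotient `D_s u(x,y) = (u x - u y)/|x-y|^s`. -/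
def Ds (n : ℕ) (s : ℝ) (u : Euc n → ℝ) (x y : Euc n) : ℝ :=
  (u x - u y) / ‖x - y‖ ^ s

/-- The modular `Φ_G(u) = ∫_Ω G(|u|) dx` (as an extended real). -/
def modG (n : ℕ) (G : ℝ → ℝ) (Ω : Set (Euc n)) (u : Euc n → ℝ) : ℝ≥0∞ :=
  ∫⁻ x in Ω, ENNReal.ofReal (G |u x|)

/-- The Gagliardo modular `Φ_{s,G}(u) = ∬ G(|D_s u(x,y)|) dx dy/|x-y|ⁿ`
(as an extended real). -/
def modsG (n : ℕ) (s : ℝ) (G : ℝ → ℝ) (u : Euc n → ℝ) : ℝ≥0∞ :=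
  ∫⁻ p : Euc n × Euc n, ENNReal.ofReal (G |Ds n s u p.1 p.2| / ‖p.1 - p.2‖ ^ (n : ℝ))

/-- Membership in `W^{s,G}_0(Ω)`: measurable, finite modulars, vanishing a.e. outside `Ω`. -/
def MemW0 (n : ℕ) (s : ℝ) (G : ℝ → ℝ) (Ω : Set (Euc n)) (u : Euc n → ℝ) : Prop :=
  Measurable u ∧ modG n G Ω u + modsG n s G u < ⊤ ∧
    ∀ᵐ x : Euc n ∂volume, x ∉ Ω → u x = 0

/-- `u` is a weak solution of `(-Δ_g)^s u = rhs(u)` in `Ω`, `u = 0` in `ℝⁿ ∖ Ω`: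
for every `v ∈ W^{s,G}_0(Ω)` the defining double integral converges absolutely and equals
`∫_Ω rhs(u) v dx`. -/
def IsWeakSol (n : ℕ) (s : ℝ) (Y : YoungPair) (Ω : Set (Euc n)) (rhs : ℝ → ℝ)
    (u : Euc n → ℝ) : Prop :=
  MemW0 n s Y.G Ω u ∧
  ∀ v : Euc n → ℝ, MemW0 n s Y.G Ω v →
    MeasureTheory.Integrable (fun p : Euc n × Euc n =>
      Y.g (Ds n s u p.1 p.2) * (v p.1 - v p.2) / ‖p.1 - p.2‖ ^ ((n : ℝ) + s)) ∧
    (∫ p : Euc n × Euc n,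
        Y.g (Ds n s u p.1 p.2) * (v p.1 - v p.2) / ‖p.1 - p.2‖ ^ ((n : ℝ) + s)) =
      ∫ x in Ω, rhs (u x) * v x

/-- The Luxemburg norm `‖u‖_{L^Ψ(Ω)}` (with value `∞` when no admissible `λ` exists). -/
def luxNorm (n : ℕ) (Ψ : ℝ → ℝ) (Ω : Set (Euc n)) (u : Euc n → ℝ) : ℝ≥0∞ :=
  sInf {lam : ℝ≥0∞ | 0 < lam ∧ lam ≠ ⊤ ∧
    (∫⁻ x in Ω, ENNReal.ofReal (Ψ (|u x| / lam.toReal))) ≤ 1}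

/-- The Gagliardo seminorm `[u]_{s,G}` (with value `∞` when no admissible `λ` exists). -/
def gagSemi (n : ℕ) (s : ℝ) (G : ℝ → ℝ) (u : Euc n → ℝ) : ℝ≥0∞ :=
  sInf {lam : ℝ≥0∞ | 0 < lam ∧ lam ≠ ⊤ ∧
    modsG n s G (fun x => u x / lam.toReal) ≤ 1}

/-! The upper half of (cond), `t g(t) ≤ p⁺ G(t)`, makes `G(t) / t^{p⁺}` nonincreasing: its right
derivative is `t^{-p⁺-1} (t g(t) - p⁺ G(t)) ≤ 0`. Normalising at `T = G⁻¹(1)` this gives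
`G⁻¹(τ) ≤ T τ^{1/p⁺}` for `τ ≤ 1` and `G⁻¹(τ) ≥ T τ^{1/p⁺}` for `τ ≥ 1`, so the integrand is
compared with `T τ^{1/p⁺ - 1 - s/n}`, whose exponent exceeds `-1` precisely because `s p⁺ < n`. -/

namespace YoungPair

variable (Y : YoungPair)

theorem g_nonneg {t : ℝ} (ht : 0 ≤ t) : 0 ≤ Y.g t := by
  simpa [Y.g_zero] using Y.g_mono (mem_Ici.2 le_rfl) ht ht

theorem g_monotone : Monotone Y.g := by
  have hodd : ∀ t, Y.g t = -Y.g (-t) := fun t => by rw [Y.g_odd, neg_neg]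
  intro a b hab
  rcases le_total 0 a with ha | ha
  · exact Y.g_mono ha (ha.trans hab) hab
  rcases le_total b 0 with hb | hb
  · rw [hodd a, hodd b, neg_le_neg_iff]
    exact Y.g_mono (neg_nonneg.2 hb) (neg_nonneg.2 ha) (neg_le_neg hab)
  · rw [hodd a]
    linarith [Y.g_nonneg (neg_nonneg.2 ha), Y.g_nonneg hb]

theorem G_zero : Y.G 0 = 0 := by
  simp [Y.G_eq 0 le_rfl]

theorem G_sub {a b : ℝ} (ha : 0 ≤ a) (hb : 0 ≤ b) :
    Y.G b - Y.G a = ∫ τ in a..b, Y.g τ := by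
  rw [Y.G_eq b hb, Y.G_eq a ha]
  exact intervalIntegral.integral_interval_sub_left Y.g_monotone.intervalIntegrable
    Y.g_monotone.intervalIntegrable

theorem G_strictMonoOn : StrictMonoOn Y.G (Ici 0) := fun a ha b _ hab => by
  have hpos := intervalIntegral.intervalIntegral_pos_of_pos_on Y.g_monotone.intervalIntegrable
    (fun x hx => Y.g_pos x (lt_of_le_of_lt ha hx.1)) hab
  linarith [Y.G_sub ha (le_trans ha hab.le)]

theorem G_pos {t : ℝ} (ht : 0 < t) : 0 < Y.G t := by
  simpa [Y.G_zero] using Y.G_strictMonoOn (mem_Ici.2 le_rfl) ht.le ht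

theorem pos_of_G_pos {t : ℝ} (ht : 0 ≤ t) (hGt : 0 < Y.G t) : 0 < t := by
  refine ht.lt_of_ne ?_
  rintro rfl
  simp [Y.G_zero] at hGt

theorem G_le_mul_g {t : ℝ} (ht : 0 ≤ t) : Y.G t ≤ t * Y.g t := by
  rw [Y.G_eq t ht]
  simpa using intervalIntegral.integral_mono_on ht Y.g_monotone.intervalIntegrable
    (intervalIntegrable_const (μ := volume)) (fun x hx => Y.g_monotone hx.2)

theorem continuousOn_G : ContinuousOn Y.G (Ici 0) :=
  (intervalIntegral.continuous_primitive (μ := volume)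
    (fun _ _ => Y.g_monotone.intervalIntegrable)
    0).continuousOn.congr fun t ht => Y.G_eq t ht

theorem hasDerivWithinAt_G {x : ℝ} (hx : 0 ≤ x) : HasDerivWithinAt Y.G (Y.g x) (Ici x) x :=
  (intervalIntegral.integral_hasDerivWithinAt_right Y.g_monotone.intervalIntegrable
    Y.g_monotone.measurable.stronglyMeasurable.stronglyMeasurableAtFilter
    ((Y.g_rightCont x hx).mono Ioi_subset_Ici_self)).congr
    (fun y hy => Y.G_eq y (hx.trans hy)) (Y.G_eq x hx)

variable {Y} {p : ℝ} (hp : ∀ t, 0 < t → t * Y.g t ≤ p * Y.G t)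
include hp

theorem one_le_of_mul_g_le : 1 ≤ p :=
  le_of_mul_le_mul_right (by linarith [hp 1 one_pos, Y.G_le_mul_g zero_le_one]) (Y.G_pos one_pos)

theorem G_div_rpow_antitoneOn : AntitoneOn (fun t => Y.G t / t ^ p) (Ioi 0) := by
  intro a (ha : 0 < a) b (hb : 0 < b) hab
  have hcont : ContinuousOn (fun t => Y.G t / t ^ p) (Icc a b) :=
    (Y.continuousOn_G.mono fun t ht => (ha.trans_le ht.1).le).div
      (continuousOn_id.rpow_const fun t ht => Or.inl (ha.trans_le ht.1).ne')
      fun t ht => (rpow_pos_of_pos (ha.trans_le ht.1) p).ne'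
  have hderiv : ∀ x ∈ Ico a b, HasDerivWithinAt (fun t => Y.G t / t ^ p)
      ((Y.g x * x ^ p - Y.G x * (p * x ^ (p - 1))) / (x ^ p) ^ 2) (Ici x) x := fun x hx =>
    (Y.hasDerivWithinAt_G (ha.trans_le hx.1).le).div
      (hasDerivAt_rpow_const (Or.inl (ha.trans_le hx.1).ne')).hasDerivWithinAt
      (rpow_pos_of_pos (ha.trans_le hx.1) p).ne'
  refine image_le_of_deriv_right_le_deriv_boundary hcont hderiv le_rfl continuousOn_const
    (fun x _ => hasDerivWithinAt_const x _ _) (fun x hx => ?_) ⟨hab, le_rfl⟩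
  have hx : 0 < x := ha.trans_le hx.1
  have hnum : Y.g x * x ^ p - Y.G x * (p * x ^ (p - 1)) =
      x ^ p / x * (x * Y.g x - p * Y.G x) := by
    rw [rpow_sub_one hx.ne']
    field_simp
  rw [hnum]
  exact div_nonpos_of_nonpos_of_nonneg
    (mul_nonpos_of_nonneg_of_nonpos (by positivity) (by linarith [hp x hx])) (by positivity)

theorem rpow_div_mul_G_le {t T : ℝ} (ht : 0 < t) (htT : t ≤ T) :
    (t / T) ^ p * Y.G T ≤ Y.G t := by
  have hT : 0 < T := ht.trans_le htT
  calc (t / T) ^ p * Y.G T = t ^ p * (Y.G T / T ^ p) := by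
        rw [div_rpow ht.le hT.le]; ring
    _ ≤ t ^ p * (Y.G t / t ^ p) :=
        mul_le_mul_of_nonneg_left (G_div_rpow_antitoneOn hp ht hT htT) (by positivity)
    _ = Y.G t := by field_simp

theorem G_le_rpow_div_mul {t T : ℝ} (hT : 0 < T) (hTt : T ≤ t) :
    Y.G t ≤ (t / T) ^ p * Y.G T := by
  have ht : 0 < t := hT.trans_le hTt
  calc Y.G t = t ^ p * (Y.G t / t ^ p) := by field_simp
    _ ≤ t ^ p * (Y.G T / T ^ p) :=
        mul_le_mul_of_nonneg_left (G_div_rpow_antitoneOn hp hT ht hTt) (by positivity)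
    _ = (t / T) ^ p * Y.G T := by
        rw [div_rpow ht.le hT.le]; ring

variable {Ginv : ℝ → ℝ} (hGinv : ∀ τ : ℝ, 0 ≤ τ → 0 ≤ Ginv τ ∧ Y.G (Ginv τ) = τ)
include hGinv

theorem inv_le_mul_rpow_inv {τ : ℝ} (hτ : 0 < τ) (hτ1 : τ ≤ 1) :
    Ginv τ ≤ Ginv 1 * τ ^ p⁻¹ := by
  obtain ⟨ht0, hGt⟩ := hGinv τ hτ.le
  obtain ⟨hT0, hGT⟩ := hGinv 1 zero_le_one
  have ht : 0 < Ginv τ := Y.pos_of_G_pos ht0 (by rwa [hGt])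
  have htT : Ginv τ ≤ Ginv 1 := (Y.G_strictMonoOn.le_iff_le ht0 hT0).1 (by rwa [hGt, hGT])
  have hbound := rpow_div_mul_G_le hp ht htT
  rw [hGt, hGT, mul_one] at hbound
  rw [← div_le_iff₀' (ht.trans_le htT),
    le_rpow_inv_iff_of_pos (div_nonneg ht0 hT0) hτ.le (by linarith [one_le_of_mul_g_le hp])]
  exact hbound

theorem mul_rpow_inv_le_inv {τ : ℝ} (hτ : 1 ≤ τ) :
    Ginv 1 * τ ^ p⁻¹ ≤ Ginv τ := by
  obtain ⟨ht0, hGt⟩ := hGinv τ (zero_le_one.trans hτ)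
  obtain ⟨hT0, hGT⟩ := hGinv 1 zero_le_one
  have hT : 0 < Ginv 1 := Y.pos_of_G_pos hT0 (by rw [hGT]; exact one_pos)
  have hTt : Ginv 1 ≤ Ginv τ := (Y.G_strictMonoOn.le_iff_le hT0 ht0).1 (by rwa [hGt, hGT])
  have hbound := G_le_rpow_div_mul hp hT hTt
  rw [hGt, hGT, mul_one] at hbound
  rw [← le_div_iff₀' hT,
    rpow_inv_le_iff_of_pos (zero_le_one.trans hτ) (div_nonneg ht0 hT0)
      (by linarith [one_le_of_mul_g_le hp])]
  exact hbound

end YoungPair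

theorem lintegral_Ioo_zero_one_ofReal_mul_rpow_lt_top (c : ℝ) {r : ℝ} (hr : -1 < r) :
    ∫⁻ τ in Ioo (0 : ℝ) 1, ENNReal.ofReal (c * τ ^ r) < ⊤ :=
  (((intervalIntegral.integrableOn_Ioo_rpow_iff one_pos).2 hr).const_mul c).lintegral_lt_top

theorem lintegral_Ioi_ofReal_mul_rpow_eq_top {a c r : ℝ} (ha : 0 < a) (hc : 0 < c)
    (hr : -1 ≤ r) : ∫⁻ τ in Ioi a, ENNReal.ofReal (c * τ ^ r) = ⊤ := by
  by_contra h
  have hnonneg : 0 ≤ᵐ[volume.restrict (Ioi a)] fun τ => c * τ ^ r := by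
    filter_upwards [ae_restrict_mem measurableSet_Ioi] with τ hτ
    have : 0 < τ := ha.trans hτ
    positivity
  have hint : IntegrableOn (fun τ : ℝ => c * τ ^ r) (Ioi a) :=
    ⟨((measurable_id.pow_const r).const_mul c).aestronglyMeasurable,
      (hasFiniteIntegral_iff_ofReal hnonneg).2 (lt_top_iff_ne_top.2 h)⟩
  have := (integrableOn_Ioi_rpow_iff ha).1
    ((integrable_const_mul_iff (isUnit_iff_ne_zero.2 hc.ne') _).1 hint)
  linarith

theorem statement9_general (n : ℕ) (s : ℝ)
    (pm pp : ℝ) (hspp : s * pp < n)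
    (Y : YoungPair) (hY : Y.Cond pm pp)
    (Ginv : ℝ → ℝ)
    (hGinv : ∀ t : ℝ, 0 ≤ t → 0 ≤ Ginv t ∧ Y.G (Ginv t) = t) :
    (∫⁻ τ in Set.Ioo (0 : ℝ) 1,
        ENNReal.ofReal (Ginv τ * τ ^ (-1 - s / n)) < ⊤) ∧
    (∫⁻ τ in Set.Ioi (1 : ℝ),
        ENNReal.ofReal (Ginv τ * τ ^ (-1 - s / n)) = ⊤) := by
  have hup : ∀ t, 0 < t → t * Y.g t ≤ pp * Y.G t := fun t ht => (hY t ht).2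
  have hpp : 0 < pp := zero_lt_one.trans_le (YoungPair.one_le_of_mul_g_le hup)
  have hsn : s / n < pp⁻¹ := by
    rcases (Nat.cast_nonneg (α := ℝ) n).eq_or_lt with hn | hn
    · simp [← hn, hpp]
    · rw [div_lt_iff₀ hn, ← div_eq_inv_mul, lt_div_iff₀ hpp]
      linarith
  have hrpow : ∀ τ : ℝ, 0 < τ → τ ^ (-1 - s / n) * τ ^ pp⁻¹ = τ ^ (pp⁻¹ - 1 - s / n) :=
    fun τ hτ => by rw [← rpow_add hτ]; ring_nf
  have hT : 0 < Ginv 1 := Y.pos_of_G_pos (hGinv 1 zero_le_one).1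
    (by rw [(hGinv 1 zero_le_one).2]; exact one_pos)
  constructor
  · refine lt_of_le_of_lt (setLIntegral_mono' measurableSet_Ioo fun τ hτ => ?_)
      (lintegral_Ioo_zero_one_ofReal_mul_rpow_lt_top (Ginv 1) (r := pp⁻¹ - 1 - s / n)
        (by linarith))
    rw [← hrpow τ hτ.1, mul_comm (τ ^ _), ← mul_assoc]
    exact ENNReal.ofReal_le_ofReal (mul_le_mul_of_nonneg_right
      (YoungPair.inv_le_mul_rpow_inv hup hGinv hτ.1 hτ.2.le) (rpow_pos_of_pos hτ.1 _).le)
  · refine top_le_iff.1 (le_of_eq_of_le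
      (lintegral_Ioi_ofReal_mul_rpow_eq_top (r := pp⁻¹ - 1 - s / n) one_pos hT
        (by linarith)).symm (setLIntegral_mono' measurableSet_Ioi fun τ hτ => ?_))
    have hτ0 : 0 < τ := one_pos.trans hτ
    rw [← hrpow τ hτ0, mul_comm (τ ^ _), ← mul_assoc]
    exact ENNReal.ofReal_le_ofReal (mul_le_mul_of_nonneg_right
      (YoungPair.mul_rpow_inv_le_inv hup hGinv (le_of_lt hτ)) (by positivity))

/-- convergence of `∫₀¹ G⁻¹(τ) τ^{-1-s/n} dτ` and divergence of
`∫₁^∞ G⁻¹(τ) τ^{-1-s/n} dτ`. -/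
theorem statement9 (n : ℕ) (hn : 1 ≤ n) (s : ℝ) (hs : s ∈ Set.Ioo (0 : ℝ) 1)
    (pm pp : ℝ) (hpm : 1 < pm) (hpmpp : pm ≤ pp) (hspp : s * pp < n)
    (Y : YoungPair) (hY : Y.Cond pm pp)
    (Ginv : ℝ → ℝ)
    (hGinv : ∀ t : ℝ, 0 ≤ t → 0 ≤ Ginv t ∧ Y.G (Ginv t) = t)
    (hGinv' : ∀ t : ℝ, 0 ≤ t → Ginv (Y.G t) = t) :
    (∫⁻ τ in Set.Ioo (0 : ℝ) 1,
        ENNReal.ofReal (Ginv τ * τ ^ (-1 - s / n)) < ⊤) ∧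
    (∫⁻ τ in Set.Ioi (1 : ℝ),
        ENNReal.ofReal (Ginv τ * τ ^ (-1 - s / n)) = ⊤) :=
  statement9_general n s pm pp hspp Y hY Ginv hGinv

end
end

section
/- Let n ≥ 1, s ∈ (0,1), and let G be a Young function whose derivative g satisfies t·g(t)/G(t) ≤ p⁺ for all t > 0 with s·p⁺ < n. Then the function w ↦ w·G(w)^{−s/n} is increasing on (0,∞); equivalently, τ ↦ G^{-1}(τ)·τ^{−s/n} is increasing on (0,∞). -/
open MeasureTheory Real Set Filter
open scoped ENNReal

noncomputable section

section Aux

variable (Y : YoungPair)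

lemma Yg_nonneg : ∀ t : ℝ, 0 ≤ t → 0 ≤ Y.g t := fun t ht => by
  have := Y.g_mono (Set.self_mem_Ici) (Set.mem_Ici.2 ht) ht
  rwa [Y.g_zero] at this

lemma Yg_monotone : Monotone Y.g := by
  intro x y hxy
  rcases le_total 0 x with hx | hx
  · exact Y.g_mono (Set.mem_Ici.2 hx) (Set.mem_Ici.2 (hx.trans hxy)) hxy
  · rcases le_total 0 y with hy | hy
    · have h2 : 0 ≤ Y.g (-x) := Yg_nonneg Y _ (by linarith)
      have h3 := Y.g_odd (-x)
      rw [neg_neg] at h3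
      have h4 : Y.g x ≤ 0 := by
        have h5 := Y.g_odd x
        linarith [Yg_nonneg Y (-x) (by linarith)]
      exact h4.trans (Yg_nonneg Y y hy)
    · have hx' := Y.g_odd (-x); rw [neg_neg] at hx'
      have hy' := Y.g_odd (-y); rw [neg_neg] at hy'
      have h : Y.g (-y) ≤ Y.g (-x) :=
        Y.g_mono (Set.mem_Ici.2 (by linarith)) (Set.mem_Ici.2 (by linarith)) (by linarith)
      linarith

lemma Yg_int : ∀ a b : ℝ, IntervalIntegrable Y.g volume a b := fun a b =>
  ((Yg_monotone Y).monotoneOn _).intervalIntegrable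

lemma YG_contOn : ContinuousOn Y.G (Set.Ici 0) := by
  have h : Continuous fun b : ℝ => ∫ x in (0:ℝ)..b, Y.g x :=
    intervalIntegral.continuous_primitive (Yg_int Y) 0
  exact h.continuousOn.congr fun t ht => Y.G_eq t ht

lemma YG_monoOn : MonotoneOn Y.G (Set.Ici 0) := by
  intro x hx y hy hxy
  rw [Y.G_eq x hx, Y.G_eq y hy]
  have h := intervalIntegral.integral_interval_sub_left (Yg_int Y 0 y) (Yg_int Y 0 x)
  have hpos : 0 ≤ ∫ t in x..y, Y.g t :=
    intervalIntegral.integral_nonneg hxy fun u hu => Yg_nonneg Y u (le_trans hx hu.1)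
  linarith

lemma YG_pos : ∀ t : ℝ, 0 < t → 0 < Y.G t := fun t ht => by
  rw [Y.G_eq t ht.le]
  exact intervalIntegral.intervalIntegral_pos_of_pos_on (Yg_int Y 0 t)
    (fun x hx => Y.g_pos x hx.1) ht

lemma YG_zero : Y.G 0 = 0 := by
  rw [Y.G_eq 0 le_rfl, intervalIntegral.integral_same]

lemma YG_hasDeriv : ∀ t : ℝ, 0 ≤ t → HasDerivWithinAt Y.G (Y.g t) (Set.Ici t) t := by
  intro t ht
  have hprim : HasDerivWithinAt (fun u => ∫ x in (0:ℝ)..u, Y.g x) (Y.g t) (Set.Ici t) t :=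
    intervalIntegral.integral_hasDerivWithinAt_right (Yg_int Y 0 t)
      ((Yg_monotone Y).measurable.aestronglyMeasurable.stronglyMeasurableAtFilter)
      ((Y.g_rightCont t (Set.mem_Ici.2 ht)).mono Set.Ioi_subset_Ici_self)
  exact hprim.congr (fun u hu => Y.G_eq u (le_trans ht hu)) (Y.G_eq t ht)

lemma YG_log_key (pp a b : ℝ) (hY : ∀ t : ℝ, 0 < t → t * Y.g t ≤ pp * Y.G t)
    (ha : 0 < a) (hab : a < b) :
    Real.log (Y.G b) ≤ Real.log (Y.G a) + pp * (Real.log b - Real.log a) := by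
  have hfc : ContinuousOn (fun t => Real.log (Y.G t)) (Set.Icc a b) := by
    refine ContinuousOn.log ((YG_contOn Y).mono fun x hx => Set.mem_Ici.2 (le_trans ha.le hx.1))
      fun x hx => (YG_pos Y x (lt_of_lt_of_le ha hx.1)).ne'
  have hf' : ∀ x ∈ Set.Ico a b,
      HasDerivWithinAt (fun t => Real.log (Y.G t)) ((Y.G x)⁻¹ * Y.g x) (Set.Ici x) x := by
    intro x hx
    have hx0 : 0 < x := lt_of_lt_of_le ha hx.1
    exact (Real.hasDerivAt_log (YG_pos Y x hx0).ne').comp_hasDerivWithinAt x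
      (YG_hasDeriv Y x hx0.le)
  have hlog : ContinuousOn Real.log (Set.Icc a b) := fun x hx =>
    (Real.continuousAt_log (ne_of_gt (lt_of_lt_of_le ha hx.1))).continuousWithinAt
  have hBc : ContinuousOn (fun t => Real.log (Y.G a) + pp * (Real.log t - Real.log a))
      (Set.Icc a b) :=
    continuousOn_const.add (continuousOn_const.mul (hlog.sub continuousOn_const))
  have hB' : ∀ x ∈ Set.Ico a b,
      HasDerivWithinAt (fun t => Real.log (Y.G a) + pp * (Real.log t - Real.log a))
        (pp * x⁻¹) (Set.Ici x) x := by
    intro x hx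
    have hx0 : 0 < x := lt_of_lt_of_le ha hx.1
    have h1 := (((Real.hasDerivAt_log hx0.ne').sub_const (Real.log a)).const_mul pp).const_add
      (Real.log (Y.G a))
    exact h1.hasDerivWithinAt
  have bound : ∀ x ∈ Set.Ico a b, (Y.G x)⁻¹ * Y.g x ≤ pp * x⁻¹ := by
    intro x hx
    have hx0 : 0 < x := lt_of_lt_of_le ha hx.1
    have hG := YG_pos Y x hx0
    rw [inv_mul_eq_div, ← div_eq_mul_inv, div_le_div_iff₀ hG hx0]
    have := hY x hx0
    nlinarith
  have ha' : Real.log (Y.G a) ≤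
      Real.log (Y.G a) + pp * (Real.log a - Real.log a) := by simp
  have := image_le_of_deriv_right_le_deriv_boundary hfc hf' ha' hBc hB' bound
    (Set.right_mem_Icc.2 hab.le)
  exact this

end Aux

/-- `w ↦ w·G(w)^{-s/n}` and `τ ↦ G⁻¹(τ)·τ^{-s/n}` are increasing on `(0,∞)`. -/
theorem statement10 (n : ℕ) (hn : 1 ≤ n) (s : ℝ) (hs : s ∈ Set.Ioo (0 : ℝ) 1)
    (pp : ℝ) (hspp : s * pp < n)
    (Y : YoungPair) (hY : ∀ t : ℝ, 0 < t → t * Y.g t ≤ pp * Y.G t)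
    (Ginv : ℝ → ℝ)
    (hGinv : ∀ t : ℝ, 0 ≤ t → 0 ≤ Ginv t ∧ Y.G (Ginv t) = t)
    (hGinv' : ∀ t : ℝ, 0 ≤ t → Ginv (Y.G t) = t) :
    StrictMonoOn (fun w : ℝ => w * Y.G w ^ (-(s / n))) (Set.Ioi 0) ∧
      StrictMonoOn (fun τ : ℝ => Ginv τ * τ ^ (-(s / n))) (Set.Ioi 0) := by
  obtain ⟨hs0, hs1⟩ := hs
  have hn0 : (0 : ℝ) < n := by exact_mod_cast Nat.lt_of_lt_of_le Nat.zero_lt_one hn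
  have hsn : 0 < s / n := div_pos hs0 hn0
  have hsp : s / n * pp < 1 := by
    rw [div_mul_eq_mul_div, div_lt_one hn0]
    exact hspp
  have part1 : StrictMonoOn (fun w : ℝ => w * Y.G w ^ (-(s / n))) (Set.Ioi 0) := by
    intro x hx y hy hxy
    have hx0 : (0:ℝ) < x := Set.mem_Ioi.1 hx
    have hy0 : (0:ℝ) < y := Set.mem_Ioi.1 hy
    have hGx := YG_pos Y x hx0
    have hGy := YG_pos Y y hy0
    have hrw : ∀ w : ℝ, 0 < w → 0 < Y.G w →
        w * Y.G w ^ (-(s / n)) = Real.exp (Real.log w + (-(s / n)) * Real.log (Y.G w)) := by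
      intro w hw hGw
      rw [Real.rpow_def_of_pos hGw, Real.exp_add, Real.exp_log hw,
        mul_comm (Real.log (Y.G w))]
    simp only []
    rw [hrw x hx0 hGx, hrw y hy0 hGy]
    apply Real.exp_lt_exp.2
    have hkey := YG_log_key Y pp x y hY hx0 hxy
    have hL : 0 < Real.log y - Real.log x := by
      have := Real.log_lt_log hx0 hxy
      linarith
    have h1 : s / n * (Real.log (Y.G y) - Real.log (Y.G x)) ≤
        s / n * (pp * (Real.log y - Real.log x)) :=
      mul_le_mul_of_nonneg_left (by linarith) hsn.le
    have h3 : s / n * pp * (Real.log y - Real.log x) < 1 * (Real.log y - Real.log x) :=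
      mul_lt_mul_of_pos_right hsp hL
    nlinarith
  refine ⟨part1, ?_⟩
  intro τ₁ hτ₁ τ₂ hτ₂ h12
  have hτ₁0 : (0:ℝ) < τ₁ := Set.mem_Ioi.1 hτ₁
  have hτ₂0 : (0:ℝ) < τ₂ := Set.mem_Ioi.1 hτ₂
  obtain ⟨hw₁0, hGw₁⟩ := hGinv τ₁ hτ₁0.le
  obtain ⟨hw₂0, hGw₂⟩ := hGinv τ₂ hτ₂0.le
  have hw₁ : 0 < Ginv τ₁ := by
    rcases hw₁0.lt_or_eq with h | h
    · exact h
    · exfalso; rw [← h, YG_zero Y] at hGw₁; linarith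
  have hw₂ : 0 < Ginv τ₂ := by
    rcases hw₂0.lt_or_eq with h | h
    · exact h
    · exfalso; rw [← h, YG_zero Y] at hGw₂; linarith
  have hww : Ginv τ₁ < Ginv τ₂ := by
    by_contra h
    push_neg at h
    have := YG_monoOn Y (Set.mem_Ici.2 hw₂0) (Set.mem_Ici.2 hw₁0) h
    rw [hGw₁, hGw₂] at this
    linarith
  have := part1 (Set.mem_Ioi.2 hw₁) (Set.mem_Ioi.2 hw₂) hww
  simpa only [hGw₁, hGw₂] using this

end
end

section
/- Let (a_k)_{k≥0} be a sequence of nonnegative real numbers and suppose there exist constants C̄ > 0, C̃ > 0 and δ ∈ (0,1) such that a_{k+1} ≤ C̄·C̃^{k+1}·a_k^{1+δ} for all k ≥ 0. Then there exists ε₀ > 0 (depending only on C̄, C̃ and δ) such that if a₀ ≤ ε₀ then a_k → 0 as k → ∞. -/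
open MeasureTheory Real Set Filter
open scoped ENNReal

noncomputable section

/-- a nonnegative sequence satisfying `a_{k+1} ≤ C̄·C̃^{k+1}·a_k^{1+δ}`
tends to `0` provided `a₀` is small enough. -/
theorem statement14 (Cb Ct δ : ℝ) (hCb : 0 < Cb) (hCt : 0 < Ct)
    (hδ : δ ∈ Set.Ioo (0 : ℝ) 1) :
    ∃ ε₀ : ℝ, 0 < ε₀ ∧
      ∀ a : ℕ → ℝ, (∀ k : ℕ, 0 ≤ a k) →
        (∀ k : ℕ, a (k + 1) ≤ Cb * Ct ^ (k + 1) * a k ^ (1 + δ)) →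
        a 0 ≤ ε₀ →
        Filter.Tendsto a Filter.atTop (nhds 0) := by
  obtain ⟨hδ0, hδ1⟩ := hδ
  set r : ℝ := min (1/2) (Ct ^ (-(1/δ))) with hr_def
  have hCtpow : (0:ℝ) < Ct ^ (-(1/δ)) := Real.rpow_pos_of_pos hCt _
  have hr0 : 0 < r := lt_min (by norm_num) hCtpow
  have hr1 : r < 1 := lt_of_le_of_lt (min_le_left _ _) (by norm_num)
  have hrδCt : Ct * r ^ δ ≤ 1 := by
    have h1 : r ≤ Ct ^ (-(1/δ)) := min_le_right _ _
    have h2 : r ^ δ ≤ (Ct ^ (-(1/δ))) ^ δ := Real.rpow_le_rpow hr0.le h1 hδ0.le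
    have h3 : (Ct ^ (-(1/δ))) ^ δ = Ct⁻¹ := by
      rw [← Real.rpow_mul hCt.le]
      have : (-(1/δ)) * δ = -1 := by field_simp
      rw [this, Real.rpow_neg_one]
    rw [h3] at h2
    calc Ct * r ^ δ ≤ Ct * Ct⁻¹ := by
          exact mul_le_mul_of_nonneg_left h2 hCt.le
      _ = 1 := mul_inv_cancel₀ hCt.ne'
  have hx0 : (0:ℝ) < r / (Cb * Ct) := div_pos hr0 (mul_pos hCb hCt)
  refine ⟨(r / (Cb * Ct)) ^ (1/δ), Real.rpow_pos_of_pos hx0 _, ?_⟩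
  intro a ha hrec ha0
  set ε₀ : ℝ := (r / (Cb * Ct)) ^ (1/δ) with hε_def
  have hε0 : 0 < ε₀ := Real.rpow_pos_of_pos hx0 _
  have hεδ : ε₀ ^ δ = r / (Cb * Ct) := by
    rw [hε_def, ← Real.rpow_mul hx0.le]
    have : 1/δ * δ = 1 := by field_simp
    rw [this, Real.rpow_one]
  have key : ∀ k : ℕ, a k ≤ ε₀ * r ^ k := by
    intro k
    induction k with
    | zero => simpa using ha0
    | succ k ih =>
      have hbk : (0:ℝ) < ε₀ * r ^ k := mul_pos hε0 (pow_pos hr0 k)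
      have h1 : a (k+1) ≤ Cb * Ct ^ (k+1) * (ε₀ * r ^ k) ^ (1+δ) := by
        refine (hrec k).trans ?_
        exact mul_le_mul_of_nonneg_left
          (Real.rpow_le_rpow (ha k) ih (by linarith))
          (by positivity)
      have h2 : (ε₀ * r ^ k) ^ (1+δ) = ε₀ * r ^ k * (r / (Cb * Ct)) * (r ^ δ) ^ k := by
        rw [Real.rpow_add hbk, Real.rpow_one,
          Real.mul_rpow hε0.le (pow_pos hr0 k).le, hεδ]
        have h3 : (r ^ k : ℝ) ^ δ = (r ^ δ) ^ k := by
          rw [← Real.rpow_natCast r k, ← Real.rpow_mul hr0.le,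
            mul_comm, Real.rpow_mul hr0.le, Real.rpow_natCast]
        rw [h3]; ring
      have h4 : Cb * Ct ^ (k+1) * (ε₀ * r ^ k * (r / (Cb * Ct)) * (r ^ δ) ^ k)
          = ε₀ * r ^ (k+1) * (Ct * r ^ δ) ^ k := by
        field_simp
        ring
      have h5 : (Ct * r ^ δ) ^ k ≤ 1 :=
        pow_le_one₀ (by positivity) hrδCt
      calc a (k+1) ≤ Cb * Ct ^ (k+1) * (ε₀ * r ^ k) ^ (1+δ) := h1
        _ = ε₀ * r ^ (k+1) * (Ct * r ^ δ) ^ k := by rw [h2, h4]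
        _ ≤ ε₀ * r ^ (k+1) * 1 := by
            exact mul_le_mul_of_nonneg_left h5 (by positivity)
        _ = ε₀ * r ^ (k+1) := mul_one _
  have hgeo : Filter.Tendsto (fun k : ℕ => ε₀ * r ^ k) Filter.atTop (nhds 0) := by
    have := (tendsto_pow_atTop_nhds_zero_of_lt_one hr0.le hr1).const_mul ε₀
    simpa using this
  exact squeeze_zero ha key hgeo


end
end

section
/- Let G be a Young function, extended evenly to ℝ, whose derivative g, extended oddly to ℝ, is nondecreasing, and suppose p⁻·G(t) ≤ t·g(t) for all t > 0, where p⁻ > 1. Then for all real numbers a, b and every r > 0: g((a−b)/r)·((a₊−b₊)/r) ≥ p⁻·G((a₊−b₊)/r), where x₊ = max{x,0} denotes the positive part. -/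
open MeasureTheory Real Set Filter
open scoped ENNReal

noncomputable section

lemma posPart_sub_le (a b : ℝ) (h : 0 < max a 0 - max b 0) : max a 0 - max b 0 ≤ a - b := by
  have ha : max a 0 = a := by
    rcases le_or_gt a 0 with h' | h'
    · rw [max_eq_right h'] at h
      have := le_max_right b (0 : ℝ)
      linarith
    · exact max_eq_left h'.le
  have hb := le_max_left b (0 : ℝ)
  linarith

/-- `g((a-b)/r)·((a₊-b₊)/r) ≥ p⁻·G((a₊-b₊)/r)`. -/
theorem statement15 (Y : YoungPair) (pm : ℝ) (hpm : 1 < pm)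
    (hcond : ∀ t : ℝ, 0 < t → pm * Y.G t ≤ t * Y.g t)
    (a b r : ℝ) (hr : 0 < r) :
    pm * Y.G ((max a 0 - max b 0) / r) ≤
      Y.g ((a - b) / r) * ((max a 0 - max b 0) / r) := by
  set c := (max a 0 - max b 0) / r with hc
  set d := (a - b) / r with hd
  have hG0 : Y.G 0 = 0 := by simpa using Y.G_eq 0 le_rfl
  rcases lt_trichotomy c 0 with h | h | h
  · -- c < 0 : then d ≤ c < 0
    have hba : 0 < max b 0 - max a 0 := by
      rw [hc, div_neg_iff] at h
      rcases h with ⟨_, h2⟩ | ⟨h1, _⟩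
      · linarith
      · linarith
    have hle : max b 0 - max a 0 ≤ b - a := posPart_sub_le b a hba
    have hdc : d ≤ c := by
      rw [hc, hd, div_le_div_iff₀ hr hr]
      nlinarith
    have hGc : Y.G c = Y.G (-c) := (Y.G_even c).symm
    have hcond' := hcond (-c) (by linarith)
    have hgc : Y.g (-c) = -Y.g c := Y.g_odd c
    have hgmono : Y.g (-c) ≤ Y.g (-d) := Y.g_mono (by simp; linarith) (by simp; linarith) (by linarith)
    have hgd : Y.g (-d) = -Y.g d := Y.g_odd d
    nlinarith
  · -- c = 0
    rw [h, hG0]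
    simp
  · -- c > 0 : then 0 < c ≤ d
    have hab : 0 < max a 0 - max b 0 := by
      by_contra hcon
      push_neg at hcon
      have : c ≤ 0 := div_nonpos_of_nonpos_of_nonneg hcon hr.le
      linarith
    have hle : max a 0 - max b 0 ≤ a - b := posPart_sub_le a b hab
    have hcd : c ≤ d := by
      rw [hc, hd, div_le_div_iff₀ hr hr]
      nlinarith
    have hgmono : Y.g c ≤ Y.g d := Y.g_mono (by simp; linarith) (by simp; linarith) hcd
    have := hcond c h
    nlinarith

end
end
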